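/- arXiv:2209.08081 — 5 statements merged into one kernel-verified Lean document; each statement's English description precedes it below -/
import Mathlib

section
/- Let H ∈ (0,1) and p, c > 0. The function f(x,y) = (p + c·x^{2H-2})(p + c·y^{2H-2})/(p + c·(x+y)^{2H-2}) over positive integers x, y attains its maximum at x = y = 1; i.e., for all positive integers x, y, f(x,y) ≤ (p+c)^2/(p + c·2^{2H-2}). -/
/-- The quantity (p + c x^{2H-2})(p + c y^{2H-2})/(p + c (x+y)^{2H-2}), over positive
integers x, y, is maximized at x = y = 1. -/
theorem stmt_3 (H p c : ℝ) (hH0 : 0 < H) (hH1 : H < 1) (hp : 0 < p) (hc : 0 < c)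
    (x y : ℕ) (hx : 0 < x) (hy : 0 < y) :
    (p + c * (x : ℝ) ^ (2 * H - 2)) * (p + c * (y : ℝ) ^ (2 * H - 2)) /
        (p + c * ((x : ℝ) + (y : ℝ)) ^ (2 * H - 2)) ≤
      (p + c) ^ 2 / (p + c * (2 : ℝ) ^ (2 * H - 2)) := by
  set α := 2 * H - 2 with hα
  have hαneg : α ≤ 0 := by nlinarith
  have hx1 : (1 : ℝ) ≤ (x : ℝ) := by exact_mod_cast hx
  have hy1 : (1 : ℝ) ≤ (y : ℝ) := by exact_mod_cast hy
  have hxpos : (0 : ℝ) < (x : ℝ) := by linarith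
  have hypos : (0 : ℝ) < (y : ℝ) := by linarith
  set u := (x : ℝ) ^ α with hu
  set v := (y : ℝ) ^ α with hv
  set s := (2 : ℝ) ^ α with hs
  set w := ((x : ℝ) + (y : ℝ)) ^ α with hw
  have hupos : 0 < u := Real.rpow_pos_of_pos hxpos α
  have hvpos : 0 < v := Real.rpow_pos_of_pos hypos α
  have hspos : 0 < s := Real.rpow_pos_of_pos (by norm_num) α
  have hwpos : 0 < w := Real.rpow_pos_of_pos (by linarith) α
  have hu1 : u ≤ 1 := Real.rpow_le_one_of_one_le_of_nonpos hx1 hαneg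
  have hv1 : v ≤ 1 := Real.rpow_le_one_of_one_le_of_nonpos hy1 hαneg
  have hs1 : s ≤ 1 := Real.rpow_le_one_of_one_le_of_nonpos (by norm_num) hαneg
  -- key: w ≥ s * u * v, since x + y ≤ 2 x y
  have hsum : (x : ℝ) + (y : ℝ) ≤ 2 * ((x : ℝ) * (y : ℝ)) := by nlinarith
  have hwkey : s * u * v ≤ w := by
    have h1 : (2 * ((x : ℝ) * (y : ℝ))) ^ α ≤ w := by
      rw [hw]
      exact Real.rpow_le_rpow_of_nonpos (by linarith) hsum hαneg
    have h2 : (2 * ((x : ℝ) * (y : ℝ))) ^ α = s * (u * v) := by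
      rw [Real.mul_rpow (by norm_num) (by positivity),
        Real.mul_rpow (le_of_lt hxpos) (le_of_lt hypos)]
    rw [h2] at h1
    linarith [h1]
  have hd1 : 0 < p + c * w := by positivity
  have hd2 : 0 < p + c * s := by positivity
  rw [div_le_div_iff₀ hd1 hd2]
  have key : (p + c * u) * (p + c * v) * (p + c * s) ≤ (p + c) ^ 2 * (p + c * (s * u * v)) := by
    nlinarith [mul_nonneg (mul_nonneg (sub_nonneg.2 hu1) (sub_nonneg.2 hv1)) hp.le,
      mul_nonneg (mul_nonneg (sub_nonneg.2 hs1) (sub_nonneg.2 (by nlinarith : u * v ≤ 1))) hp.le,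
      mul_nonneg (mul_nonneg (mul_nonneg (sub_nonneg.2 hu1) (sub_nonneg.2 hv1)) hspos.le) hc.le,
      mul_nonneg (mul_nonneg (sub_nonneg.2 hs1) (sub_nonneg.2 (by nlinarith : u * v ≤ 1))) hc.le,
      mul_pos hp hc, mul_pos hp hp, mul_pos hc hc]
  calc (p + c * u) * (p + c * v) * (p + c * s) ≤ (p + c) ^ 2 * (p + c * (s * u * v)) := key
    _ ≤ (p + c) ^ 2 * (p + c * w) := by
        apply mul_le_mul_of_nonneg_left _ (by positivity)
        have := mul_le_mul_of_nonneg_left hwkey hc.le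
        linarith
end

section
/- Let H ∈ (0,1), p, c ∈ (0,1). Define L(A) = p·Π_{j=1}^n (p + c(i_j - i_{j-1})^{2H-2}) for A = {i_0 < ... < i_n} ⊂ ℕ, L(∅) = 1. Then for finite sets A ⊆ A' ⊂ ℕ with i ∉ A' the ratio is monotone: L(A ∪ {i})/L(A) ≤ L(A' ∪ {i})/L(A'). -/
open Finset

/-!
Listing `A` increasingly, `L(A)` is `p` times the product of the factors `f(d) = p + c d^(2H-2)`
over the gaps `d` between consecutive elements. Inserting `i` between its neighbours `a < i < b`
replaces the gap `u + v` by the gaps `u = i - a` and `v = b - i`, so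
`L(A ∪ {i}) / L(A) = f(u) f(v) / f(u + v)`, where a missing neighbour is an infinite gap with
`f(∞) = p`. Enlarging `A` can only shrink `u` and `v`, and the ratio is antitone in each gap:
since `t ↦ t^α` with `α = 2H - 2 < 0` is convex, the increments `t^α - (t+m)^α` decrease
in `t`, and `x (x' + m) ≥ x' (x + m)` for `x ≥ x'`.
-/

/-- The operator L*_{H,p,c} of the paper: for A = {i_0 < i_1 < ⋯ < i_n} ⊂ ℕ,
L(A) = p ∏_{j=1}^n (p + c (i_j - i_{j-1})^{2H-2}), with L(∅) = 1 and L({i}) = p. -/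
noncomputable def Lop (H p c : ℝ) (A : Finset ℕ) : ℝ :=
  if A = ∅ then 1
  else
    p * ∏ j ∈ Finset.range (A.card - 1),
      (p + c * (((A.sort (· ≤ ·)).getD (j + 1) 0 - (A.sort (· ≤ ·)).getD j 0 : ℕ) : ℝ)
        ^ (2 * H - 2))

theorem Real.antitoneOn_rpow_sub_rpow_add {α m : ℝ} (hα : α ≤ 0) (hm : 0 ≤ m) :
    AntitoneOn (fun t : ℝ => t ^ α - (t + m) ^ α) (Set.Ioi 0) := by
  have hderiv : ∀ t ∈ Set.Ioi (0 : ℝ), HasDerivAt (fun t : ℝ => t ^ α - (t + m) ^ α)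
      (α * t ^ (α - 1) - α * (t + m) ^ (α - 1)) t := fun t (ht : 0 < t) =>
    (Real.hasDerivAt_rpow_const (Or.inl ht.ne')).sub
      ((Real.hasDerivAt_rpow_const (Or.inl (by positivity))).comp_add_const t m)
  refine antitoneOn_of_hasDerivWithinAt_nonpos (convex_Ioi 0)
    (fun t ht => (hderiv t ht).continuousAt.continuousWithinAt)
    (fun t ht => (hderiv t (interior_subset ht)).hasDerivWithinAt) fun t ht => ?_
  rw [interior_Ioi] at ht
  have : (t + m) ^ (α - 1) ≤ t ^ (α - 1) :=
    Real.rpow_le_rpow_of_nonpos ht (le_add_of_nonneg_right hm) (by linarith)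
  nlinarith

theorem Real.add_mul_rpow_cross_le {α a b x x' m : ℝ} (hα : α ≤ 0) (ha : 0 ≤ a) (hb : 0 ≤ b)
    (hx' : 0 < x') (hx : x' ≤ x) (hm : 0 ≤ m) :
    (a + b * x ^ α) * (a + b * (x' + m) ^ α) ≤ (a + b * x' ^ α) * (a + b * (x + m) ^ α) := by
  have hdiff : x ^ α - (x + m) ^ α ≤ x' ^ α - (x' + m) ^ α :=
    Real.antitoneOn_rpow_sub_rpow_add hα hm hx' (hx'.trans_le hx) hx
  have hprod : x ^ α * (x' + m) ^ α ≤ x' ^ α * (x + m) ^ α := by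
    rw [← Real.mul_rpow (by linarith) (by linarith), ← Real.mul_rpow (by linarith) (by linarith)]
    exact Real.rpow_le_rpow_of_nonpos (mul_pos hx' (by linarith)) (by nlinarith) hα
  nlinarith [mul_le_mul_of_nonneg_left hdiff (mul_nonneg ha hb),
    mul_le_mul_of_nonneg_left hprod (mul_nonneg hb hb)]

/-- `⊤` stands for the gap to a missing neighbour; `p` is the limit of the factor as `d → ∞`. -/
noncomputable def gapFactor (H p c : ℝ) : ℕ∞ → ℝ
  | ⊤ => p
  | (d : ℕ) => p + c * (d : ℝ) ^ (2 * H - 2)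

section GapFactor

variable {H p c : ℝ}

@[simp] theorem gapFactor_top : gapFactor H p c ⊤ = p := rfl

theorem gapFactor_coe (d : ℕ) : gapFactor H p c d = p + c * (d : ℝ) ^ (2 * H - 2) := rfl

theorem le_gapFactor (hc : 0 ≤ c) (d : ℕ∞) : p ≤ gapFactor H p c d := by
  induction d using ENat.recTopCoe with
  | top => exact le_rfl
  | coe d => exact le_add_of_nonneg_right (by positivity)

theorem gapFactor_pos (hp : 0 < p) (hc : 0 ≤ c) (d : ℕ∞) : 0 < gapFactor H p c d :=
  hp.trans_le (le_gapFactor hc d)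

theorem gapFactor_antitoneOn (hH : H ≤ 1) (hc : 0 ≤ c) :
    AntitoneOn (gapFactor H p c) (Set.Ici 1) := by
  intro d hd d' _ hdd'
  induction d' using ENat.recTopCoe with
  | top => exact le_gapFactor hc d
  | coe d' =>
    lift d to ℕ using ne_top_of_le_ne_top (ENat.natCast_ne_top d') hdd'
    have hd₁ : (1 : ℝ) ≤ d := by exact_mod_cast Set.mem_Ici.1 hd
    have := Real.rpow_le_rpow_of_nonpos (by linarith) (show (d : ℝ) ≤ d' by exact_mod_cast hdd')
      (show 2 * H - 2 ≤ 0 by linarith)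
    rw [gapFactor_coe, gapFactor_coe]
    gcongr

theorem gapFactor_mul_gapFactor_add_le (hH : H ≤ 1) (hp : 0 ≤ p) (hc : 0 ≤ c) {u u' v : ℕ∞}
    (hu' : 1 ≤ u') (hu : u' ≤ u) (hv : 1 ≤ v) :
    gapFactor H p c u * gapFactor H p c (u' + v) ≤
      gapFactor H p c u' * gapFactor H p c (u + v) := by
  have hanti := gapFactor_antitoneOn (p := p) hH hc
  induction v using ENat.recTopCoe with
  | top =>
    rw [add_top, add_top, gapFactor_top]
    exact mul_le_mul_of_nonneg_right (hanti hu' (hu'.trans hu) hu) hp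
  | coe v =>
  induction u using ENat.recTopCoe with
  | top =>
    rw [top_add, gapFactor_top, mul_comm]
    exact mul_le_mul_of_nonneg_right (hanti hu' (hu'.trans le_self_add) le_self_add) hp
  | coe u =>
  lift u' to ℕ using ne_top_of_le_ne_top (ENat.natCast_ne_top u) hu
  rw [← Nat.cast_add, ← Nat.cast_add, gapFactor_coe, gapFactor_coe, gapFactor_coe, gapFactor_coe]
  push_cast
  exact Real.add_mul_rpow_cross_le (by linarith) hp hc (Nat.cast_pos.2 (by exact_mod_cast hu'))
    (by exact_mod_cast hu) (Nat.cast_nonneg v)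

end GapFactor

noncomputable def insertionRatio (H p c : ℝ) (u v : ℕ∞) : ℝ :=
  gapFactor H p c u * gapFactor H p c v / gapFactor H p c (u + v)

section InsertionRatio

variable {H p c : ℝ}

theorem insertionRatio_comm (u v : ℕ∞) : insertionRatio H p c u v = insertionRatio H p c v u := by
  rw [insertionRatio, insertionRatio, mul_comm, add_comm]

theorem insertionRatio_le_left (hH : H ≤ 1) (hp : 0 < p) (hc : 0 ≤ c) {u u' v : ℕ∞}
    (hu' : 1 ≤ u') (hu : u' ≤ u) (hv : 1 ≤ v) :
    insertionRatio H p c u v ≤ insertionRatio H p c u' v := by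
  rw [insertionRatio, insertionRatio,
    div_le_div_iff₀ (gapFactor_pos hp hc _) (gapFactor_pos hp hc _)]
  have := mul_le_mul_of_nonneg_right (gapFactor_mul_gapFactor_add_le hH hp.le hc hu' hu hv)
    (gapFactor_pos (H := H) hp hc v).le
  linear_combination this

theorem insertionRatio_anti (hH : H ≤ 1) (hp : 0 < p) (hc : 0 ≤ c) {u u' v v' : ℕ∞}
    (hu' : 1 ≤ u') (hu : u' ≤ u) (hv' : 1 ≤ v') (hv : v' ≤ v) :
    insertionRatio H p c u v ≤ insertionRatio H p c u' v' :=
  calc insertionRatio H p c u v ≤ insertionRatio H p c u' v :=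
        insertionRatio_le_left hH hp hc hu' hu (hv'.trans hv)
    _ = insertionRatio H p c v u' := insertionRatio_comm _ _
    _ ≤ insertionRatio H p c v' u' := insertionRatio_le_left hH hp hc hv' hv hu'
    _ = insertionRatio H p c u' v' := insertionRatio_comm _ _

end InsertionRatio

def optGap : Option ℕ → Option ℕ → ℕ∞
  | some a, some b => (b - a : ℕ)
  | _, _ => ⊤

@[simp] theorem optGap_none_left (b : Option ℕ) : optGap none b = ⊤ := by cases b <;> rfl

@[simp] theorem optGap_none_right (a : Option ℕ) : optGap a none = ⊤ := by cases a <;> rfl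

@[simp] theorem optGap_some_some (a b : ℕ) : optGap (some a) (some b) = (b - a : ℕ) := rfl

theorem optGap_eq_add {a b : Option ℕ} {i : ℕ} (ha : ∀ x ∈ a, x ≤ i) (hb : ∀ y ∈ b, i ≤ y) :
    optGap a b = optGap a (some i) + optGap (some i) b := by
  cases a with
  | none => simp
  | some x =>
    cases b with
    | none => simp
    | some y =>
      have hx := ha x rfl
      have hy := hb y rfl
      rw [optGap_some_some, optGap_some_some, optGap_some_some, ← Nat.cast_add]
      congr 1
      omega

noncomputable def listL (H p c : ℝ) : List ℕ → ℝ
  | [] => 1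
  | [_] => p
  | a :: b :: t => gapFactor H p c (b - a : ℕ) * listL H p c (b :: t)

section ListL

variable {H p c : ℝ}

theorem listL_pos (hp : 0 < p) (hc : 0 ≤ c) : ∀ l : List ℕ, 0 < listL H p c l
  | [] => one_pos
  | [_] => hp
  | _ :: b :: t => mul_pos (gapFactor_pos hp hc _) (listL_pos hp hc (b :: t))

theorem listL_cons (i : ℕ) (l : List ℕ) :
    listL H p c (i :: l) = gapFactor H p c (optGap (some i) l.head?) * listL H p c l := by
  cases l <;> simp [listL]

theorem mul_listL_append : ∀ l₁ l₂ : List ℕ, p * listL H p c (l₁ ++ l₂) =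
    listL H p c l₁ * listL H p c l₂ * gapFactor H p c (optGap l₁.getLast? l₂.head?)
  | [], l₂ => by simp [listL, mul_comm]
  | [a], l₂ => by
    rw [List.singleton_append, listL_cons, List.getLast?_singleton, listL]
    ring
  | a :: b :: t, l₂ => by
    rw [List.cons_append, List.cons_append, listL, listL, ← List.cons_append,
      List.getLast?_cons_cons]
    linear_combination gapFactor H p c (b - a : ℕ) * mul_listL_append (b :: t) l₂

theorem listL_append_cons_mul (hp : p ≠ 0) (l₁ l₂ : List ℕ) (i : ℕ) :
    listL H p c (l₁ ++ i :: l₂) * gapFactor H p c (optGap l₁.getLast? l₂.head?) =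
      gapFactor H p c (optGap l₁.getLast? (some i)) * gapFactor H p c (optGap (some i) l₂.head?) *
        listL H p c (l₁ ++ l₂) := by
  have h₁ := mul_listL_append (H := H) (p := p) (c := c) l₁ (i :: l₂)
  have h₂ := mul_listL_append (H := H) (p := p) (c := c) l₁ l₂
  rw [listL_cons, List.head?_cons] at h₁
  refine mul_left_cancel₀ hp ?_
  linear_combination gapFactor H p c (optGap l₁.getLast? l₂.head?) * h₁ -
    gapFactor H p c (optGap l₁.getLast? (some i)) * gapFactor H p c (optGap (some i) l₂.head?) * h₂

theorem listL_eq_prod : ∀ l : List ℕ, l ≠ [] →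
    p * ∏ j ∈ Finset.range (l.length - 1),
      (p + c * ((l.getD (j + 1) 0 - l.getD j 0 : ℕ) : ℝ) ^ (2 * H - 2)) = listL H p c l
  | [], h => absurd rfl h
  | [a], _ => by simp [listL]
  | a :: b :: t, _ => by
    rw [listL, ← listL_eq_prod (b :: t) (List.cons_ne_nil _ _)]
    simp only [List.length_cons, Nat.add_sub_cancel, Finset.prod_range_succ', List.getD_cons_succ,
      List.getD_cons_zero, gapFactor_coe]
    ring

theorem Lop_eq_listL (A : Finset ℕ) : Lop H p c A = listL H p c (A.sort (· ≤ ·)) := by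
  rcases eq_or_ne A ∅ with rfl | hA
  · simp [Lop, listL]
  · rw [Lop, if_neg hA, ← listL_eq_prod _ (by
      simpa [← List.length_pos_iff, Finset.card_pos, Finset.nonempty_iff_ne_empty] using hA),
      Finset.length_sort]

end ListL

theorem optGap_head?_eq_inf {l : List ℕ} (hl : l.Pairwise (· ≤ ·)) (i : ℕ) :
    optGap (some i) l.head? = l.toFinset.inf fun b => ((b - i : ℕ) : ℕ∞) := by
  cases l with
  | nil => simp
  | cons a t =>
    rw [List.head?_cons, optGap_some_some, List.toFinset_cons, Finset.inf_insert, eq_comm,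
      inf_eq_left]
    exact Finset.le_inf fun b hb => by
      gcongr
      exact List.rel_of_pairwise_cons hl (List.mem_toFinset.1 hb)

theorem optGap_getLast?_eq_inf {l : List ℕ} (hl : l.Pairwise (· ≤ ·)) (i : ℕ) :
    optGap l.getLast? (some i) = l.toFinset.inf fun a => ((i - a : ℕ) : ℕ∞) := by
  rw [← List.head?_reverse, ← List.toFinset_reverse]
  cases h : l.reverse with
  | nil => simp
  | cons a t =>
    have hl' : (a :: t).Pairwise (· ≥ ·) := h ▸ List.pairwise_reverse.2 hl
    rw [List.head?_cons, optGap_some_some, List.toFinset_cons, Finset.inf_insert, eq_comm,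
      inf_eq_left]
    exact Finset.le_inf fun b hb => by
      gcongr
      exact List.rel_of_pairwise_cons hl' (List.mem_toFinset.1 hb)

theorem Finset.sort_eq_of_pairwise_lt {α : Type*} [LinearOrder α] {s : Finset α} {l : List α}
    (hl : l.Pairwise (· < ·)) (hs : ∀ x, x ∈ s ↔ x ∈ l) : s.sort (· ≤ ·) = l := by
  have hs' : s = l.toFinset := Finset.ext fun x => by simp [hs]
  rw [hs', List.toFinset_sort _ (hl.imp ne_of_lt)]
  exact hl.imp le_of_lt

noncomputable def predGap (A : Finset ℕ) (i : ℕ) : ℕ∞ :=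
  (A.filter (· < i)).inf fun a => ((i - a : ℕ) : ℕ∞)

noncomputable def succGap (A : Finset ℕ) (i : ℕ) : ℕ∞ :=
  (A.filter (i < ·)).inf fun b => ((b - i : ℕ) : ℕ∞)

theorem one_le_predGap (A : Finset ℕ) (i : ℕ) : 1 ≤ predGap A i :=
  Finset.le_inf fun _ ha => by exact_mod_cast Nat.sub_pos_of_lt (Finset.mem_filter.1 ha).2

theorem one_le_succGap (A : Finset ℕ) (i : ℕ) : 1 ≤ succGap A i :=
  Finset.le_inf fun _ hb => by exact_mod_cast Nat.sub_pos_of_lt (Finset.mem_filter.1 hb).2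

theorem predGap_antitone (i : ℕ) : Antitone (predGap · i) := fun _ _ h =>
  Finset.inf_mono (Finset.filter_subset_filter _ h)

theorem succGap_antitone (i : ℕ) : Antitone (succGap · i) := fun _ _ h =>
  Finset.inf_mono (Finset.filter_subset_filter _ h)

theorem Lop_union_singleton_div {H p c : ℝ} (hp : 0 < p) (hc : 0 ≤ c) {A : Finset ℕ} {i : ℕ}
    (hi : i ∉ A) :
    Lop H p c (A ∪ {i}) / Lop H p c A = insertionRatio H p c (predGap A i) (succGap A i) := by
  set l₁ := (A.filter (· < i)).sort (· ≤ ·)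
  set l₂ := (A.filter (i < ·)).sort (· ≤ ·)
  have mem₁ {x : ℕ} : x ∈ l₁ ↔ x ∈ A ∧ x < i := by simp [l₁]
  have mem₂ {x : ℕ} : x ∈ l₂ ↔ x ∈ A ∧ i < x := by simp [l₂]
  have hl₁ : l₁.Pairwise (· < ·) := (Finset.sortedLT_sort _).pairwise
  have hl₂ : l₂.Pairwise (· < ·) := (Finset.sortedLT_sort _).pairwise
  have hA : A.sort (· ≤ ·) = l₁ ++ l₂ :=
    Finset.sort_eq_of_pairwise_lt (List.pairwise_append.2 ⟨hl₁, hl₂, by grind⟩) (by grind)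
  have hAi : (A ∪ {i}).sort (· ≤ ·) = l₁ ++ i :: l₂ :=
    Finset.sort_eq_of_pairwise_lt
      (List.pairwise_append.2 ⟨hl₁, List.pairwise_cons.2 ⟨by grind, hl₂⟩, by grind⟩) (by grind)
  have key := listL_append_cons_mul (H := H) (c := c) hp.ne' l₁ l₂ i
  rw [optGap_eq_add (i := i) (fun a ha => (mem₁.1 (List.mem_of_getLast? ha)).2.le)
      (fun b hb => (mem₂.1 (List.mem_of_mem_head? hb)).2.le),
    optGap_getLast?_eq_inf (Finset.pairwise_sort _ _),
    optGap_head?_eq_inf (Finset.pairwise_sort _ _), Finset.sort_toFinset,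
    Finset.sort_toFinset] at key
  rw [Lop_eq_listL, Lop_eq_listL, hA, hAi, insertionRatio, predGap, succGap,
    div_eq_div_iff (listL_pos hp hc _).ne' (gapFactor_pos hp hc _).ne']
  linear_combination key

/-- The ratio L(A ∪ {i})/L(A) is non-decreasing as the set A grows. -/
theorem stmt_7 (H p c : ℝ) (hH : 0 < H ∧ H < 1) (hp : 0 < p ∧ p < 1)
    (hc : 0 < c ∧ c < 1) (A A' : Finset ℕ) (hAA' : A ⊆ A') (i : ℕ) (hi : i ∉ A') :
    Lop H p c (A ∪ {i}) / Lop H p c A ≤ Lop H p c (A' ∪ {i}) / Lop H p c A' := by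
  rw [Lop_union_singleton_div hp.1 hc.1.le (fun h => hi (hAA' h)),
    Lop_union_singleton_div hp.1 hc.1.le hi]
  exact insertionRatio_anti hH.2.le hp.1 hc.1.le (one_le_predGap A' i) (predGap_antitone i hAA')
    (one_le_succGap A' i) (succGap_antitone i hAA')
end

section
/- Let H ∈ (0,1), p, c ∈ (0,1), and assume (p+c)^2/(p + c·2^{2H-2}) < 1. Then for any integers i_0 < i_1 < i_2, the two-step ratio satisfies (p + c(i_1-i_0)^{2H-2})(p + c(i_2-i_1)^{2H-2}) < p + c(i_2-i_0)^{2H-2}, equivalently L({i_0,i_1,i_2})/L({i_0,i_2}) < 1, where L is as in the paper. -/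
lemma key_8 (p c α a b : ℝ) (hp : 0 < p) (hc : 0 < c) (hα : α < 0)
    (ha : 1 ≤ a) (hb : 1 ≤ b) (hab : a ≤ b)
    (hassump : (p + c) ^ 2 < p + c * (2 : ℝ) ^ α) :
    (p + c * a ^ α) * (p + c * b ^ α) < p + c * (a + b) ^ α := by
  have ha0 : (0:ℝ) < a := by linarith
  have hb0 : (0:ℝ) < b := by linarith
  have hu1 : a ^ α ≤ 1 := Real.rpow_le_one_of_one_le_of_nonpos ha hα.le
  have hv1 : b ^ α ≤ 1 := Real.rpow_le_one_of_one_le_of_nonpos hb hα.le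
  have hu0 : (0:ℝ) < a ^ α := Real.rpow_pos_of_pos ha0 α
  have hv0 : (0:ℝ) < b ^ α := Real.rpow_pos_of_pos hb0 α
  have h2 : (2:ℝ) ^ α < 1 := Real.rpow_lt_one_of_one_lt_of_neg (by norm_num) hα
  have hsum : (2:ℝ) ^ α * b ^ α ≤ (a + b) ^ α := by
    have h1 : ((2:ℝ) * b) ^ α = (2:ℝ) ^ α * b ^ α :=
      Real.mul_rpow (by norm_num) hb0.le
    rw [← h1]
    exact Real.rpow_le_rpow_of_nonpos (by linarith) (by linarith) hα.le
  have hpc1 : p + c < 1 := by nlinarith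
  have hA : 0 < p - p ^ 2 - p * c := by nlinarith
  have step1 : (p + c * a ^ α) * (p + c * b ^ α)
      ≤ p ^ 2 + p * c * (1 + b ^ α) + c ^ 2 * b ^ α := by
    nlinarith [mul_nonneg (mul_pos hp hc).le (sub_nonneg.2 hu1),
      mul_nonneg (mul_nonneg (sq_nonneg c) hv0.le) (sub_nonneg.2 hu1)]
  have step2 : p ^ 2 + p * c * (1 + b ^ α) + c ^ 2 * b ^ α
      < p + c * ((2:ℝ) ^ α * b ^ α) := by
    nlinarith [mul_nonneg (sub_nonneg.2 hv1) hA.le,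
      mul_pos hv0 (by linarith : (0:ℝ) < p + c * (2:ℝ) ^ α - (p + c) ^ 2)]
  have step3 : c * ((2:ℝ) ^ α * b ^ α) ≤ c * (a + b) ^ α :=
    mul_le_mul_of_nonneg_left hsum hc.le
  linarith

/-- The m = 1 case of ASSUMPTION (b): if (p+c)² < p + c·2^{2H-2}, then for all
i_0 < i_1 < i_2, (p + c(i_1-i_0)^{2H-2})(p + c(i_2-i_1)^{2H-2}) < p + c(i_2-i_0)^{2H-2}. -/
theorem stmt_8 (H p c : ℝ) (hH : 0 < H ∧ H < 1) (hp : 0 < p ∧ p < 1)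
    (hc : 0 < c ∧ c < 1)
    (hassump : (p + c) ^ 2 < p + c * (2 : ℝ) ^ (2 * H - 2)) :
    ∀ i0 i1 i2 : ℕ, i0 < i1 → i1 < i2 →
      (p + c * ((i1 - i0 : ℕ) : ℝ) ^ (2 * H - 2)) *
          (p + c * ((i2 - i1 : ℕ) : ℝ) ^ (2 * H - 2)) <
        p + c * ((i2 - i0 : ℕ) : ℝ) ^ (2 * H - 2) := by
  intro i0 i1 i2 h01 h12
  have hα : 2 * H - 2 < 0 := by linarith [hH.2]
  have ha1 : (1:ℕ) ≤ i1 - i0 := by omega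
  have hb1 : (1:ℕ) ≤ i2 - i1 := by omega
  have ha : (1:ℝ) ≤ ((i1 - i0 : ℕ) : ℝ) := by exact_mod_cast ha1
  have hb : (1:ℝ) ≤ ((i2 - i1 : ℕ) : ℝ) := by exact_mod_cast hb1
  have hsplit : ((i2 - i0 : ℕ) : ℝ) = ((i1 - i0 : ℕ) : ℝ) + ((i2 - i1 : ℕ) : ℝ) := by
    have : i2 - i0 = (i1 - i0) + (i2 - i1) := by omega
    rw [this]; push_cast; ring
  rw [hsplit]
  rcases le_total ((i1 - i0 : ℕ) : ℝ) ((i2 - i1 : ℕ) : ℝ) with h | h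
  · exact key_8 p c _ _ _ hp.1 hc.1 hα ha hb h hassump
  · rw [mul_comm, add_comm ((i1 - i0 : ℕ) : ℝ)]
    exact key_8 p c _ _ _ hp.1 hc.1 hα hb ha h hassump
end

section
/- Under the same two-point probability assumptions and with state space {0,1,...,m} ⊂ ℝ, for i ≠ j, Cov(X_i, X_j) = Σ_{k=1}^m k^2 p_k c_k |i-j|^{2H_k-2}. -/
open Finset MeasureTheory

/-!
Both moments are finite sums against the one- and two-point laws, and the value `0` contributes
nothing to them, so only the laws on `{1, …, m}` enter. There the joint law is the product law
plus the diagonal correction `p_k c_k |i - j|^(2H_k - 2)`, hence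
`E[X_i X_j] = (Σ k p_k)² + Σ k² p_k c_k |i - j|^(2H_k - 2)` while `E[X_i] E[X_j] = (Σ k p_k)²`.
-/

theorem integral_comp_eq_sum_measureReal_preimage {Ω α : Type*} [MeasurableSpace Ω]
    [MeasurableSpace α] [MeasurableSingletonClass α] (μ : Measure Ω) [IsFiniteMeasure μ]
    {g : Ω → α} (hg : Measurable g) {s : Finset α} (hs : ∀ ω, g ω ∈ s) (f : α → ℝ) :
    ∫ ω, f (g ω) ∂μ = ∑ a ∈ s, μ.real (g ⁻¹' {a}) * f a := by
  have hfib : ∀ a, MeasurableSet (g ⁻¹' {a}) := fun a => hg (measurableSet_singleton a)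
  have hdecomp : ∀ ω, f (g ω) = ∑ a ∈ s, (g ⁻¹' {a}).indicator (fun _ => f a) ω := fun ω => by
    rw [sum_eq_single_of_mem (g ω) (hs ω) fun a _ ha => Set.indicator_of_notMem (ha ·.symm) _]
    exact (Set.indicator_of_mem rfl _).symm
  simp_rw [hdecomp]
  rw [integral_finsetSum _ fun a _ => (integrable_const _).indicator (hfib a)]
  simp only [integral_indicator_const _ (hfib _), smul_eq_mul]

theorem sum_range_succ_eq_sum_Icc_one {M : Type*} [AddCommMonoid M] {f : ℕ → M} (h0 : f 0 = 0)
    (m : ℕ) :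
    ∑ k ∈ range (m + 1), f k = ∑ k ∈ Icc 1 m, f k := by
  rw [range_eq_Ico, sum_eq_sum_Ico_succ_bot m.succ_pos, h0, zero_add, zero_add,
    Nat.succ_eq_add_one, Ico_add_one_right_eq_Icc]

theorem sum_sum_mul_mul_add_ite {R ι : Type*} [CommSemiring R] [DecidableEq ι] (s : Finset ι)
    (a p d : ι → R) :
    ∑ k ∈ s, ∑ k' ∈ s, a k * a k' * (p k * p k' + if k = k' then d k else 0) =
      (∑ k ∈ s, a k * p k) ^ 2 + ∑ k ∈ s, a k ^ 2 * d k := by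
  simp only [mul_add, mul_ite, mul_zero, sum_add_distrib, sum_ite_eq, sum_ite_mem, inter_self,
    sq, sum_mul_sum]
  congr 1
  exact sum_congr rfl fun _ _ => sum_congr rfl fun _ _ => by ring

theorem stmt_11_general {Ω : Type*} [MeasurableSpace Ω] (μ : Measure Ω) [IsProbabilityMeasure μ]
    (m : ℕ) (X : ℕ → Ω → ℕ) (p c H : ℕ → ℝ)
    (hmeas : ∀ i, Measurable (X i))
    (hrange : ∀ i ω, X i ω ≤ m)
    (hp : ∀ i k, k ≤ m → (μ {ω | X i ω = k}).toReal = p k)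
    (h2 : ∀ i j k, i ≠ j → 1 ≤ k → k ≤ m →
      (μ {ω | X i ω = k ∧ X j ω = k}).toReal =
        p k * (p k + c k * |(i : ℝ) - (j : ℝ)| ^ (2 * H k - 2)))
    (h3 : ∀ i j k k', i ≠ j → 1 ≤ k → k ≤ m → 1 ≤ k' → k' ≤ m → k ≠ k' →
      (μ {ω | X i ω = k ∧ X j ω = k'}).toReal = p k * p k')
    (i j : ℕ) (hij : i ≠ j) :
    (∫ ω, (X i ω : ℝ) * (X j ω : ℝ) ∂μ) -
        (∫ ω, (X i ω : ℝ) ∂μ) * (∫ ω, (X j ω : ℝ) ∂μ) =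
      ∑ k ∈ Finset.Icc 1 m,
        (k : ℝ) ^ 2 * p k * c k * |(i : ℝ) - (j : ℝ)| ^ (2 * H k - 2) := by
  set r : ℕ → ℝ := fun k => |(i : ℝ) - (j : ℝ)| ^ (2 * H k - 2)
  have hmem : ∀ l ω, X l ω ∈ range (m + 1) := fun l ω => mem_range_succ_iff.2 (hrange l ω)
  have hmean : ∀ l, ∫ ω, (X l ω : ℝ) ∂μ = ∑ k ∈ Icc 1 m, (k : ℝ) * p k := fun l => by
    rw [integral_comp_eq_sum_measureReal_preimage μ (hmeas l) (hmem l) (fun k : ℕ => (k : ℝ)),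
      sum_range_succ_eq_sum_Icc_one (by simp)]
    exact sum_congr rfl fun k hk => by rw [mul_comm, ← hp l k (mem_Icc.1 hk).2]; rfl
  have hjoint : ∀ k ∈ Icc 1 m, ∀ k' ∈ Icc 1 m,
      μ.real ((fun ω => (X i ω, X j ω)) ⁻¹' {(k, k')}) =
        p k * p k' + if k = k' then p k * c k * r k else 0 := by
    intro k hk k' hk'
    rw [mem_Icc] at hk hk'
    have hfib : (fun ω => (X i ω, X j ω)) ⁻¹' {(k, k')} = {ω | X i ω = k ∧ X j ω = k'} := by
      ext ω; simp
    rw [hfib]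
    split_ifs with hkk
    · subst hkk
      exact (h2 i j k hij hk.1 hk.2).trans (by ring)
    · exact (h3 i j k k' hij hk.1 hk.2 hk'.1 hk'.2 hkk).trans (add_zero _).symm
  have hprod : ∫ ω, (X i ω : ℝ) * (X j ω : ℝ) ∂μ =
      (∑ k ∈ Icc 1 m, (k : ℝ) * p k) ^ 2 + ∑ k ∈ Icc 1 m, (k : ℝ) ^ 2 * (p k * c k * r k) := by
    rw [integral_comp_eq_sum_measureReal_preimage μ ((hmeas i).prodMk (hmeas j))
      (s := range (m + 1) ×ˢ range (m + 1)) (fun ω => mem_product.2 ⟨hmem i ω, hmem j ω⟩)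
      (fun q : ℕ × ℕ => (q.1 : ℝ) * q.2), sum_product, sum_range_succ_eq_sum_Icc_one (by simp),
      ← sum_sum_mul_mul_add_ite]
    refine sum_congr rfl fun k hk => ?_
    rw [sum_range_succ_eq_sum_Icc_one (by simp)]
    exact sum_congr rfl fun k' hk' => by rw [hjoint k hk k' hk', mul_comm]
  rw [hprod, hmean, hmean, sq, add_sub_cancel_left]
  exact sum_congr rfl fun k _ => by ring

/-- Cov(X_i, X_j) = Σ_{k=1}^m k² p_k c_k |i-j|^{2H_k-2} for i ≠ j, where
Cov(X_i, X_j) = E[X_i X_j] - E[X_i] E[X_j]. -/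
theorem stmt_11 {Ω : Type*} [MeasurableSpace Ω] (μ : Measure Ω) [IsProbabilityMeasure μ]
    (m : ℕ) (hm : 1 ≤ m) (X : ℕ → Ω → ℕ) (p c H : ℕ → ℝ)
    (hmeas : ∀ i, Measurable (X i))
    (hrange : ∀ i ω, X i ω ≤ m)
    (hsum : ∑ k ∈ Finset.range (m + 1), p k = 1)
    (hp : ∀ i k, k ≤ m → (μ {ω | X i ω = k}).toReal = p k)
    (h2 : ∀ i j k, i ≠ j → 1 ≤ k → k ≤ m →
      (μ {ω | X i ω = k ∧ X j ω = k}).toReal =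
        p k * (p k + c k * |(i : ℝ) - (j : ℝ)| ^ (2 * H k - 2)))
    (h3 : ∀ i j k k', i ≠ j → 1 ≤ k → k ≤ m → 1 ≤ k' → k' ≤ m → k ≠ k' →
      (μ {ω | X i ω = k ∧ X j ω = k'}).toReal = p k * p k')
    (i j : ℕ) (hij : i ≠ j) :
    (∫ ω, (X i ω : ℝ) * (X j ω : ℝ) ∂μ) -
        (∫ ω, (X i ω : ℝ) ∂μ) * (∫ ω, (X j ω : ℝ) ∂μ) =
      ∑ k ∈ Finset.Icc 1 m,
        (k : ℝ) ^ 2 * p k * c k * |(i : ℝ) - (j : ℝ)| ^ (2 * H k - 2) :=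
  stmt_11_general μ m X p c H hmeas hrange hp h2 h3 i j hij
end

section
/- Define D*(A_1,...,A_m; {i_0}) for pairwise disjoint finite sets by the identity D*(A_1,...,A_m; {i_0}) = Π_{k=1}^m L_k(A_k) · (1 - Σ_{k'=1}^m L_{k'}(A_{k'} ∪ {i_0})/L_{k'}(A_{k'})), where L_k = L*_{H_k,p_k,c_k}. Under ASSUMPTION (a,b) (in particular Σ_{k'=1}^m (p_{k'} + c_{k'} d^{2H_{k'}-2}) < 1 for all positive integers d and the three-point inequality (2.9)), D*(A_1,...,A_m; {i_0}) > 0. -/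
/-! Write `φ d = p + c * d ^ (2H - 2)`. Inserting a new point `i₀` into `A` multiplies
`L(A)` by `p` (if `A = ∅`), by one extra factor `φ d ≤ p + c` (if `i₀` lies outside the range
of `A`), or by `φ x * φ y / φ (x + y)` (if `i₀` splits a gap `x + y` of `A`). As `t ↦ t ^ (2H - 2)`
is decreasing and convex, all of these are at most `φ 1 * φ 1 / φ 2`, the three-point ratio of
assumption (b) at `0 < 1 < 2`. Hence the sum of the ratios is `< 1`, while every `L_k(A_k) > 0`. -/

open Finset

def gapProd {M : Type*} [CommMonoid M] (f : ℕ → M) : List ℕ → M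
  | [] => 1
  | [_] => 1
  | a :: b :: l => f (b - a) * gapProd f (b :: l)

section
variable {R : Type*} [CommSemiring R] [PartialOrder R] [IsOrderedRing R] {f : ℕ → R}

theorem gapProd_nonneg (hf : ∀ d, 0 ≤ f d) : ∀ l, 0 ≤ gapProd f l
  | [] | [_] => zero_le_one
  | _ :: b :: l => mul_nonneg (hf _) (gapProd_nonneg hf (b :: l))

theorem gapProd_orderedInsert_le {B : R} (hf : ∀ d, 0 ≤ f d) (hfB : ∀ d, 0 < d → f d ≤ B)
    (hf_add : ∀ d e, 0 < d → 0 < e → f d * f e ≤ B * f (d + e)) {i : ℕ} :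
    ∀ {l : List ℕ}, l ≠ [] → i ∉ l → gapProd f (l.orderedInsert (· ≤ ·) i) ≤ B * gapProd f l
  | [a], _, hi => by
    have hia : i ≠ a := by simpa using hi
    rcases hia.lt_or_gt with hia | hai
    · simpa [gapProd, hia.le] using hfB (a - i) (by omega)
    · simpa [gapProd, hai.not_ge] using hfB (i - a) (by omega)
  | a :: b :: l, _, hi => by
    simp only [List.mem_cons, not_or] at hi
    obtain ⟨hia, hib, hil⟩ := hi
    by_cases hle_a : i ≤ a
    · rw [List.orderedInsert_cons_of_le _ _ hle_a, gapProd]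
      exact mul_le_mul_of_nonneg_right (hfB _ (by omega)) (gapProd_nonneg hf _)
    by_cases hle_b : i ≤ b
    · rw [List.orderedInsert_of_not_le _ _ hle_a, List.orderedInsert_cons_of_le _ _ hle_b]
      have hgap : b - a = (i - a) + (b - i) := by omega
      simp only [gapProd]
      calc f (i - a) * (f (b - i) * gapProd f (b :: l))
          = f (i - a) * f (b - i) * gapProd f (b :: l) := by ring
        _ ≤ B * f (b - a) * gapProd f (b :: l) := by
          rw [hgap]
          exact mul_le_mul_of_nonneg_right (hf_add _ _ (by omega) (by omega)) (gapProd_nonneg hf _)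
        _ = B * (f (b - a) * gapProd f (b :: l)) := by ring
    · have ih := gapProd_orderedInsert_le hf hfB hf_add (i := i) (l := b :: l) (by simp)
        (by simp [hib, hil])
      rw [List.orderedInsert_of_not_le _ _ hle_b] at ih
      rw [List.orderedInsert_of_not_le _ _ hle_a, List.orderedInsert_of_not_le _ _ hle_b]
      simp only [gapProd]
      calc f (b - a) * gapProd f (b :: l.orderedInsert (· ≤ ·) i)
          ≤ f (b - a) * (B * gapProd f (b :: l)) := mul_le_mul_of_nonneg_left ih (hf _)
        _ = B * (f (b - a) * gapProd f (b :: l)) := by ring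

end

theorem gapProd_pos {R : Type*} [CommSemiring R] [PartialOrder R] [IsStrictOrderedRing R]
    {f : ℕ → R} (hf : ∀ d, 0 < f d) : ∀ l, 0 < gapProd f l
  | [] | [_] => zero_lt_one
  | _ :: b :: l => mul_pos (hf _) (gapProd_pos hf (b :: l))

theorem prod_range_getD_eq_gapProd {M : Type*} [CommMonoid M] (f : ℕ → M) : ∀ l : List ℕ,
    ∏ j ∈ range (l.length - 1), f (l.getD (j + 1) 0 - l.getD j 0) = gapProd f l
  | [] | [_] => by simp [gapProd]
  | a :: b :: l => by
    rw [gapProd, ← prod_range_getD_eq_gapProd f (b :: l)]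
    simp only [List.length_cons, Nat.add_sub_cancel, prod_range_succ']
    simp [mul_comm]

theorem Finset.sort_insert_eq_orderedInsert {α : Type*} [LinearOrder α] {s : Finset α} {a : α}
    (ha : a ∉ s) : (insert a s).sort (· ≤ ·) = (s.sort (· ≤ ·)).orderedInsert (· ≤ ·) a := by
  refine List.Perm.eq_of_pairwise' (Finset.pairwise_sort _ _)
    ((Finset.pairwise_sort _ _).orderedInsert _ _) ?_
  exact ((Finset.sort_perm_toList _ _).trans (Finset.toList_insert ha)).trans
    (((Finset.sort_perm_toList _ _).symm.cons a).trans (List.perm_orderedInsert _ _ _).symm)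

theorem rpow_add_one_add_rpow_le {α x y : ℝ} (hα : α ≤ 0) (hx : 1 ≤ x) (hy : 0 ≤ y) :
    x ^ α + (1 + y) ^ α ≤ 1 + (x + y) ^ α := by
  have hx0 : 0 < x := by linarith
  -- `x ^ α - (x + y) ^ α = x ^ α * (1 - (1 + y / x) ^ α)` is a product of two nonnegative
  -- factors that decrease in `x`, so it is at most its value at `x = 1`.
  have hsplit : (x + y) ^ α = x ^ α * (1 + y / x) ^ α := by
    rw [← Real.mul_rpow hx0.le (by positivity), mul_add, mul_one, mul_div_cancel₀ _ hx0.ne']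
  have hxα : x ^ α ≤ 1 := Real.rpow_le_one_of_one_le_of_nonpos hx hα
  have hmono : (1 + y) ^ α ≤ (1 + y / x) ^ α :=
    Real.rpow_le_rpow_of_nonpos (by positivity)
      (by gcongr; exact div_le_self hy hx) hα
  have hle1 : (1 + y / x) ^ α ≤ 1 :=
    Real.rpow_le_one_of_one_le_of_nonpos (by linarith [div_nonneg hy hx0.le]) hα
  have hxα0 : 0 ≤ x ^ α := Real.rpow_nonneg hx0.le α
  rw [hsplit]
  nlinarith [mul_le_mul_of_nonneg_left hmono hxα0]

theorem rpow_mul_one_add_rpow_le {α x y : ℝ} (hα : α ≤ 0) (hx : 1 ≤ x) (hy : 0 ≤ y) :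
    x ^ α * (1 + y) ^ α ≤ (x + y) ^ α := by
  rw [← Real.mul_rpow (by linarith) (by linarith)]
  exact Real.rpow_le_rpow_of_nonpos (by linarith) (by nlinarith) hα

theorem mul_one_add_rpow_le {α p c x y : ℝ} (hα : α ≤ 0) (hp : 0 ≤ p) (hc : 0 ≤ c)
    (hx : 1 ≤ x) (hy : 0 ≤ y) :
    (p + c * x ^ α) * (p + c * (1 + y) ^ α) ≤ (p + c) * (p + c * (x + y) ^ α) := by
  nlinarith [mul_le_mul_of_nonneg_left (rpow_add_one_add_rpow_le hα hx hy) (mul_nonneg hp hc),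
    mul_le_mul_of_nonneg_left (rpow_mul_one_add_rpow_le hα hx hy) (mul_nonneg hc hc)]

theorem mul_mul_two_rpow_le {α p c x y : ℝ} (hα : α ≤ 0) (hp : 0 ≤ p) (hc : 0 ≤ c)
    (hx : 1 ≤ x) (hy : 1 ≤ y) :
    (p + c * x ^ α) * (p + c * y ^ α) * (p + c * 2 ^ α)
      ≤ (p + c) * (p + c) * (p + c * (x + y) ^ α) := by
  have hφx : 0 ≤ p + c * x ^ α := add_nonneg hp (mul_nonneg hc (Real.rpow_nonneg (by linarith) _))
  calc (p + c * x ^ α) * (p + c * y ^ α) * (p + c * 2 ^ α)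
      = (p + c * x ^ α) * ((p + c * y ^ α) * (p + c * (1 + 1) ^ α)) := by norm_num [mul_assoc]
    _ ≤ (p + c * x ^ α) * ((p + c) * (p + c * (y + 1) ^ α)) :=
        mul_le_mul_of_nonneg_left (mul_one_add_rpow_le hα hp hc hy zero_le_one) hφx
    _ = (p + c) * ((p + c * x ^ α) * (p + c * (1 + y) ^ α)) := by rw [add_comm y]; ring
    _ ≤ (p + c) * ((p + c) * (p + c * (x + y) ^ α)) :=
        mul_le_mul_of_nonneg_left (mul_one_add_rpow_le hα hp hc hx (by linarith)) (by linarith)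
    _ = (p + c) * (p + c) * (p + c * (x + y) ^ α) := by ring

theorem Lop_eq_mul_gapProd (H p c : ℝ) {A : Finset ℕ} (hA : A.Nonempty) :
    Lop H p c A = p * gapProd (fun d : ℕ => p + c * (d : ℝ) ^ (2 * H - 2)) (A.sort (· ≤ ·)) := by
  rw [Lop, if_neg hA.ne_empty, ← prod_range_getD_eq_gapProd, Finset.length_sort]

theorem Lop_pos {H p c : ℝ} (hp : 0 < p) (hc : 0 ≤ c) (A : Finset ℕ) : 0 < Lop H p c A := by
  rcases A.eq_empty_or_nonempty with rfl | hA
  · simp [Lop]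
  · rw [Lop_eq_mul_gapProd H p c hA]
    exact mul_pos hp (gapProd_pos (fun d => by positivity) _)

theorem Lop_union_singleton_div_le {H p c : ℝ} (hH : H ≤ 1) (hp : 0 < p) (hc : 0 ≤ c)
    {A : Finset ℕ} {i : ℕ} (hi : i ∉ A) :
    Lop H p c (A ∪ {i}) / Lop H p c A ≤ (p + c) * (p + c) / (p + c * 2 ^ (2 * H - 2)) := by
  have hα : 2 * H - 2 ≤ 0 := by linarith
  have h2 : 0 < p + c * (2 : ℝ) ^ (2 * H - 2) := by positivity
  have hpc : p + c ≤ (p + c) * (p + c) / (p + c * 2 ^ (2 * H - 2)) := by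
    rw [le_div_iff₀ h2]
    have : (2 : ℝ) ^ (2 * H - 2) ≤ 1 := Real.rpow_le_one_of_one_le_of_nonpos one_le_two hα
    gcongr
    linarith [mul_le_mul_of_nonneg_left this hc]
  rw [div_le_iff₀ (Lop_pos hp hc A), Finset.union_singleton]
  rcases A.eq_empty_or_nonempty with rfl | hA
  · simpa [Lop] using (le_add_of_nonneg_right hc).trans hpc
  rw [Lop_eq_mul_gapProd H p c hA, Lop_eq_mul_gapProd H p c (Finset.insert_nonempty _ _),
    Finset.sort_insert_eq_orderedInsert hi, mul_left_comm]
  gcongr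
  refine gapProd_orderedInsert_le (fun d => by positivity) (fun d hd => ?_) (fun d e hd he => ?_)
    (List.ne_nil_of_length_pos (by simpa using hA.card_pos)) (by simpa using hi)
  · have hd1 : (1 : ℝ) ≤ d := by exact_mod_cast hd
    have := Real.rpow_le_one_of_one_le_of_nonpos hd1 hα
    linarith [mul_le_mul_of_nonneg_left this hc]
  · rw [div_mul_eq_mul_div, le_div_iff₀ h2, Nat.cast_add]
    exact mul_mul_two_rpow_le hα hp.le hc (by exact_mod_cast hd) (by exact_mod_cast he)

theorem stmt_15_general (m : ℕ) (H p c : ℕ → ℝ)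
    (hH : ∀ k ∈ Finset.Icc 1 m, 0 < H k ∧ H k < 1)
    (hp : ∀ k ∈ Finset.Icc 1 m, 0 < p k ∧ p k < 1)
    (hc : ∀ k ∈ Finset.Icc 1 m, 0 < c k ∧ c k < 1)
    (hb : ∀ i0 i1 i2 : ℕ, i0 < i1 → i1 < i2 →
      ∑ k ∈ Finset.Icc 1 m,
        (p k + c k * ((i1 - i0 : ℕ) : ℝ) ^ (2 * H k - 2)) *
          (p k + c k * ((i2 - i1 : ℕ) : ℝ) ^ (2 * H k - 2)) /
            (p k + c k * ((i2 - i0 : ℕ) : ℝ) ^ (2 * H k - 2)) < 1)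
    (A : ℕ → Finset ℕ) (i0 : ℕ)
    (hi0 : ∀ k ∈ Finset.Icc 1 m, i0 ∉ A k) :
    0 < (∏ k ∈ Finset.Icc 1 m, Lop (H k) (p k) (c k) (A k)) *
        (1 - ∑ k ∈ Finset.Icc 1 m,
          Lop (H k) (p k) (c k) (A k ∪ {i0}) / Lop (H k) (p k) (c k) (A k)) := by
  have hratio : ∀ k ∈ Icc 1 m,
      Lop (H k) (p k) (c k) (A k ∪ {i0}) / Lop (H k) (p k) (c k) (A k)
        ≤ (p k + c k) * (p k + c k) / (p k + c k * 2 ^ (2 * H k - 2)) := fun k hk =>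
    Lop_union_singleton_div_le (hH k hk).2.le (hp k hk).1 (hc k hk).1.le (hi0 k hk)
  have hB : ∑ k ∈ Icc 1 m, (p k + c k) * (p k + c k) / (p k + c k * 2 ^ (2 * H k - 2)) < 1 := by
    simpa using hb 0 1 2 one_pos one_lt_two
  exact mul_pos (prod_pos fun k hk => Lop_pos (hp k hk).1 (hc k hk).1.le _)
    (sub_pos.2 ((sum_le_sum hratio).trans_lt hB))

/-- Lemma 6.2(i): under ASSUMPTION (a,b),
D*(A_1,…,A_m;{i_0}) = ∏_k L_k(A_k) (1 - Σ_{k'} L_{k'}(A_{k'} ∪ {i_0})/L_{k'}(A_{k'})) > 0. -/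
theorem stmt_15 (m : ℕ) (hm : 1 ≤ m) (H p c : ℕ → ℝ)
    (hH : ∀ k ∈ Finset.Icc 1 m, 0 < H k ∧ H k < 1)
    (hp : ∀ k ∈ Finset.Icc 1 m, 0 < p k ∧ p k < 1)
    (hc : ∀ k ∈ Finset.Icc 1 m, 0 < c k ∧ c k < 1)
    (hd : ∀ d : ℕ, 0 < d →
      ∑ k ∈ Finset.Icc 1 m, (p k + c k * (d : ℝ) ^ (2 * H k - 2)) < 1)
    (hb : ∀ i0 i1 i2 : ℕ, i0 < i1 → i1 < i2 →
      ∑ k ∈ Finset.Icc 1 m,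
        (p k + c k * ((i1 - i0 : ℕ) : ℝ) ^ (2 * H k - 2)) *
          (p k + c k * ((i2 - i1 : ℕ) : ℝ) ^ (2 * H k - 2)) /
            (p k + c k * ((i2 - i0 : ℕ) : ℝ) ^ (2 * H k - 2)) < 1)
    (A : ℕ → Finset ℕ) (i0 : ℕ)
    (hdisj : ∀ k k', k ≠ k' → Disjoint (A k) (A k'))
    (hi0 : ∀ k ∈ Finset.Icc 1 m, i0 ∉ A k) :
    0 < (∏ k ∈ Finset.Icc 1 m, Lop (H k) (p k) (c k) (A k)) *
        (1 - ∑ k ∈ Finset.Icc 1 m,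
          Lop (H k) (p k) (c k) (A k ∪ {i0}) / Lop (H k) (p k) (c k) (A k)) :=
  stmt_15_general m H p c hH hp hc hb A i0 hi0
end
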